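/- Let A ∈ ℝ^{n_s×n_s}, B ∈ ℝ^{n_s×n_u}, C ∈ ℝ^{n_o×n_s}. Let π₁ be a residual feed-forward neural network with input dimension n_s and output dimension n_u, and π₂ one with input dimension n_o and output dimension n_s, both with activation σ, σ(0) = 0, sector bounded at every neuron. Consider the K = 2 stacked network acting on 𝐱 = (x₁, x₂) ∈ ℝ^{2n_s} with T₁¹ = [I_{n_s}, I_{n_s}], T₁² = B, T₂¹ = [0, C], T₂² = I_{n_s}, with stacked isolation matrices R̂_π, R̂_ξ and matrices Ψ(2), M(2)(λ) for some λ ∈ ℝ^{n_{σ_1}+n_{σ_2}} with λ ≥ 0. Set Â = diag(A, A) ∈ ℝ^{2n_s×2n_s}. Suppose there exists a symmetric positive definite P̂ ∈ ℝ^{2n_s×2n_s} such that R̂_πᵀ [[ÂᵀP̂ + P̂Â, P̂], [P̂, 0]] R̂_π + R̂_ξᵀ Ψ(2)ᵀ M(2)(λ) Ψ(2) R̂_ξ is negative definite. Then there exist M > 0 and κ > 0 such that all differentiable x, x̂ : [0,∞) → ℝ^{n_s} satisfying ẋ(t) = A x(t) + B π₁(x̂(t)) and x̂′(t) = A x̂(t)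 + B π₁(x̂(t)) + π₂(C(x̂(t) − x(t))) satisfy ‖x(t)‖₂ + ‖x(t) − x̂(t)‖₂ ≤ M e^{−κ t} (‖x(0)‖₂ + ‖x̂(0)‖₂) for all t ≥ 0. -/

import Mathlib

open Matrix

/-- A residual feed-forward neural network with `Lm + 1` hidden layers,
input dimension `n₀`, output dimension `m`.  `hw l` is the width of hidden layer `l+1`
(0-based: hidden layers are indexed `0, …, Lm`).  `W l` is the weight matrix feeding
hidden layer `l`, `Wout` the output weight matrix `W^{L+1}` and `Wskip` the shortcut
connection weight matrix `W^{L+2}`. -/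
structure ResNet (n₀ m : ℕ) where
  Lm : ℕ
  hw : ℕ → ℕ
  W : (l : ℕ) → Matrix (Fin (hw l)) (Fin (if l = 0 then n₀ else hw (l - 1))) ℝ
  Wout : Matrix (Fin m) (Fin (hw Lm)) ℝ
  Wskip : Matrix (Fin m) (Fin n₀) ℝ

namespace ResNet

variable {n₀ m : ℕ}

/-- dimension of layer `l` (`l = 0` is the input layer, `l = 1, …, Lm+1` the hidden layers). -/
def dim (net : ResNet n₀ m) (l : ℕ) : ℕ := if l = 0 then n₀ else net.hw (l - 1)

/-- the forward pass through the hidden layers: `hfun σ net l x` is `h^l(x)`. -/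
def hfun (σ : ℝ → ℝ) (net : ResNet n₀ m) : (l : ℕ) → (Fin n₀ → ℝ) → (Fin (net.dim l) → ℝ)
  | 0, x => x
  | l + 1, x => fun i => σ ((net.W l).mulVec (hfun σ net l x) i)

/-- the output `π(x) = W^{L+1} h^L(x) + W^{L+2} x` of the residual network. -/
def apply (σ : ℝ → ℝ) (net : ResNet n₀ m) (x : Fin n₀ → ℝ) : Fin m → ℝ :=
  net.Wout.mulVec (hfun σ net (net.Lm + 1) x) + net.Wskip.mulVec x

/-- index type for the neurons (all hidden layers stacked). -/
abbrev NIdx (net : ResNet n₀ m) : Type := Σ l : Fin (net.Lm + 1), Fin (net.hw l)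

/-- the first-layer weight matrix `W^1`. -/
def W1 (net : ResNet n₀ m) : Matrix (Fin (net.hw 0)) (Fin n₀) ℝ := net.W 0

/-- the isolation block `N_{πw} = [0 ⋯ 0 W^{L+1}]`. -/
def Npiw (net : ResNet n₀ m) : Matrix (Fin m) net.NIdx ℝ :=
  Matrix.of fun i j =>
    if h : (j.1 : ℕ) = net.Lm then net.Wout i (Fin.cast (congrArg net.hw h) j.2) else 0

/-- the isolation block `N_{ξx} = [(W^1 T)ᵀ 0 ⋯ 0]ᵀ` for an input pre-matrix `T`. -/
def Nxix (net : ResNet n₀ m) {P : Type*} (T : Matrix (Fin n₀) P ℝ) :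
    Matrix net.NIdx P ℝ :=
  Matrix.of fun j i =>
    if h : (j.1 : ℕ) = 0 then (net.W1 * T) (Fin.cast (congrArg net.hw h) j.2) i else 0

/-- the isolation block `N_{ξw}` (block `(l, l-1)` is `W^l`). -/
def Nxiw (net : ResNet n₀ m) : Matrix net.NIdx net.NIdx ℝ :=
  Matrix.of fun i j =>
    if h : (j.1 : ℕ) + 1 = (i.1 : ℕ) then
      net.W i.1 i.2 (Fin.cast (by
        rw [if_neg (by omega : ¬ ((i.1 : ℕ)) = 0)]
        exact congrArg net.hw (by omega)) j.2)
    else 0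

/-- the isolation matrix `R_π = [[I, 0], [N_{πx}, N_{πw}]]` with input pre-matrix `T`. -/
def Rpi (net : ResNet n₀ m) {P : Type*} [DecidableEq P]
    (T : Matrix (Fin n₀) P ℝ) : Matrix (P ⊕ Fin m) (P ⊕ net.NIdx) ℝ :=
  Matrix.fromBlocks 1 0 (net.Wskip * T) net.Npiw

/-- the isolation matrix `R_ξ = [[N_{ξx}, N_{ξw}], [0, I]]` with input pre-matrix `T`. -/
def Rxi (net : ResNet n₀ m) {P : Type*}
    (T : Matrix (Fin n₀) P ℝ) : Matrix (net.NIdx ⊕ net.NIdx) (P ⊕ net.NIdx) ℝ :=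
  Matrix.fromBlocks (net.Nxix T) net.Nxiw 0 1

end ResNet

/-- `Ψ = [[diag β, -I], [-diag α, I]]`. -/
def Psi {I : Type*} [DecidableEq I] (a b : I → ℝ) : Matrix (I ⊕ I) (I ⊕ I) ℝ :=
  Matrix.fromBlocks (Matrix.diagonal b) (-1) (-(Matrix.diagonal a)) 1

/-- `M(λ) = [[0, diag λ], [diag λ, 0]]`. -/
def Mmat {I : Type*} [DecidableEq I] (lam : I → ℝ) : Matrix (I ⊕ I) (I ⊕ I) ℝ :=
  Matrix.fromBlocks 0 (Matrix.diagonal lam) (Matrix.diagonal lam) 0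

/-- a matrix is negative definite if its quadratic form is negative on nonzero vectors. -/
def Matrix.NegDef {I : Type*} [Fintype I] (S : Matrix I I ℝ) : Prop :=
  ∀ x : I → ℝ, x ≠ 0 → x ⬝ᵥ S.mulVec x < 0

/-- the Euclidean norm `‖v‖₂` of a finitely indexed real vector. -/
noncomputable def norm2 {I : Type*} [Fintype I] (v : I → ℝ) : ℝ := Real.sqrt (∑ i, v i ^ 2)

/-- `σ` is sector bounded in `[a, b]`. -/
def SectorBounded (σ : ℝ → ℝ) (a b : ℝ) : Prop := ∀ s : ℝ, 0 ≤ (σ s - a * s) * (b * s - σ s)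

/-- `(C, A)` is an observable pair. -/
def Observable {n p : Type*} [Fintype n] [DecidableEq n]
    (C : Matrix p n ℝ) (A : Matrix n n ℝ) : Prop :=
  ∀ x : n → ℝ, (∀ k : ℕ, (C * A ^ k).mulVec x = 0) → x = 0

/-- a real square matrix is Hurwitz if all its complex eigenvalues have negative real part. -/
def IsHurwitz {n : ℕ} (A : Matrix (Fin n) (Fin n) ℝ) : Prop :=
  ∀ μ ∈ spectrum ℂ (A.map (Complex.ofReal)), μ.re < 0

/-- induced `∞`-norm of a matrix: maximum absolute row sum. -/
noncomputable def rowSumNorm {I J : Type*} [Fintype J] (A : Matrix I J ℝ) : ℝ :=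
  ⨆ i, ∑ j, |A i j|

section Stack2

variable {p : Type*} {n₁ m₁ n₂ m₂ o₁ o₂ : ℕ}

/-- stacked isolation block `N̂_{πx}` for two networks with input pre-matrices `T11, T21`
and output post-matrices `T12, T22`. -/
def Npix2 (net1 : ResNet n₁ m₁) (net2 : ResNet n₂ m₂)
    (T11 : Matrix (Fin n₁) p ℝ) (T21 : Matrix (Fin n₂) p ℝ)
    (T12 : Matrix (Fin o₁) (Fin m₁) ℝ) (T22 : Matrix (Fin o₂) (Fin m₂) ℝ) :
    Matrix (Fin o₁ ⊕ Fin o₂) p ℝ :=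
  Matrix.fromRows (T12 * net1.Wskip * T11) (T22 * net2.Wskip * T21)

/-- stacked isolation block `N̂_{πw}` for two networks. -/
def Npiw2 (net1 : ResNet n₁ m₁) (net2 : ResNet n₂ m₂)
    (T12 : Matrix (Fin o₁) (Fin m₁) ℝ) (T22 : Matrix (Fin o₂) (Fin m₂) ℝ) :
    Matrix (Fin o₁ ⊕ Fin o₂) (net1.NIdx ⊕ net2.NIdx) ℝ :=
  Matrix.fromBlocks (T12 * net1.Npiw) 0 0 (T22 * net2.Npiw)

/-- stacked isolation block `N̂_{ξx}` for two networks. -/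
def Nxix2 (net1 : ResNet n₁ m₁) (net2 : ResNet n₂ m₂)
    (T11 : Matrix (Fin n₁) p ℝ) (T21 : Matrix (Fin n₂) p ℝ) :
    Matrix (net1.NIdx ⊕ net2.NIdx) p ℝ :=
  Matrix.fromRows (net1.Nxix T11) (net2.Nxix T21)

/-- stacked isolation block `N̂_{ξw}` for two networks. -/
def Nxiw2 (net1 : ResNet n₁ m₁) (net2 : ResNet n₂ m₂) :
    Matrix (net1.NIdx ⊕ net2.NIdx) (net1.NIdx ⊕ net2.NIdx) ℝ :=
  Matrix.fromBlocks net1.Nxiw 0 0 net2.Nxiw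

/-- stacked isolation matrix `R̂_π` for two networks. -/
def Rpi2 (net1 : ResNet n₁ m₁) (net2 : ResNet n₂ m₂) [DecidableEq p]
    (T11 : Matrix (Fin n₁) p ℝ) (T21 : Matrix (Fin n₂) p ℝ)
    (T12 : Matrix (Fin o₁) (Fin m₁) ℝ) (T22 : Matrix (Fin o₂) (Fin m₂) ℝ) :
    Matrix (p ⊕ (Fin o₁ ⊕ Fin o₂)) (p ⊕ (net1.NIdx ⊕ net2.NIdx)) ℝ :=
  Matrix.fromBlocks 1 0 (Npix2 net1 net2 T11 T21 T12 T22) (Npiw2 net1 net2 T12 T22)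

/-- stacked isolation matrix `R̂_ξ` for two networks. -/
def Rxi2 (net1 : ResNet n₁ m₁) (net2 : ResNet n₂ m₂)
    (T11 : Matrix (Fin n₁) p ℝ) (T21 : Matrix (Fin n₂) p ℝ) :
    Matrix ((net1.NIdx ⊕ net2.NIdx) ⊕ (net1.NIdx ⊕ net2.NIdx)) (p ⊕ (net1.NIdx ⊕ net2.NIdx)) ℝ :=
  Matrix.fromBlocks (Nxix2 net1 net2 T11 T21) (Nxiw2 net1 net2) 0 1

end Stack2

/-!
In the coordinates `X = (x, x̂ - x)` the closed loop reads `Ẋ = Â X + u`, where `u` is the output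
of the stacked network at `X`. With `w` the stacked hidden activations and `z = (X, w)`, the
isolation matrices give `R̂_π z = (X, u)` and `R̂_ξ z = (ξ, w)` with `w = σ(ξ)`. Hence the
derivative of `V = Xᵀ P̂ X` is the first quadratic form of the LMI at `z`, while the second one is
nonnegative by the sector conditions (S-procedure). With `S` the LMI matrix and
`a ‖X‖² ≤ V ≤ b ‖X‖²`, this gives `V̇ ≤ zᵀ S z ≤ -c ‖X‖² ≤ -(c / b) V`, and Grönwall's inequality
makes `V`, hence `‖X‖`, decay exponentially.
-/

section HomogeneousBounds

variable {E : Type*} [NormedAddCommGroup E] [NormedSpace ℝ E] {f : E → ℝ}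

theorem map_zero_of_homogeneous (hhom : ∀ (c : ℝ) z, f (c • z) = c ^ 2 * f z) : f 0 = 0 := by
  simpa using hhom 0 0

theorem eq_norm_sq_mul_of_homogeneous (hhom : ∀ (c : ℝ) z, f (c • z) = c ^ 2 * f z) (z : E) :
    f z = ‖z‖ ^ 2 * f (‖z‖⁻¹ • z) := by
  rcases eq_or_ne z 0 with rfl | hz
  · simp [map_zero_of_homogeneous hhom]
  · rw [hhom, ← mul_assoc, ← mul_pow, mul_inv_cancel₀ (norm_ne_zero_iff.2 hz), one_pow, one_mul]

variable [FiniteDimensional ℝ E]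

theorem exists_pos_mul_norm_sq_le_of_homogeneous (hf : Continuous f)
    (hhom : ∀ (c : ℝ) z, f (c • z) = c ^ 2 * f z) (hpos : ∀ z ≠ 0, 0 < f z) :
    ∃ a > 0, ∀ z, a * ‖z‖ ^ 2 ≤ f z := by
  rcases subsingleton_or_nontrivial E with hE | hE
  · refine ⟨1, one_pos, fun z => ?_⟩
    simp [Subsingleton.elim z 0, map_zero_of_homogeneous hhom]
  obtain ⟨u, hu, hmin⟩ := (isCompact_sphere (0 : E) 1).exists_isMinOn
    (NormedSpace.sphere_nonempty.2 zero_le_one) hf.continuousOn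
  have hu0 : u ≠ 0 := ne_zero_of_mem_unit_sphere ⟨u, hu⟩
  refine ⟨f u, hpos u hu0, fun z => ?_⟩
  rcases eq_or_ne z 0 with rfl | hz
  · simp [map_zero_of_homogeneous hhom]
  rw [eq_norm_sq_mul_of_homogeneous hhom z, mul_comm]
  refine mul_le_mul_of_nonneg_left (hmin ?_) (sq_nonneg _)
  simp [norm_smul, hz]

theorem exists_le_mul_norm_sq_of_homogeneous (hf : Continuous f)
    (hhom : ∀ (c : ℝ) z, f (c • z) = c ^ 2 * f z) :
    ∃ b > 0, ∀ z, f z ≤ b * ‖z‖ ^ 2 := by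
  obtain ⟨C, hC⟩ := (isCompact_closedBall (0 : E) 1).exists_bound_of_continuousOn hf.continuousOn
  refine ⟨max C 1, by positivity, fun z => ?_⟩
  have hunit : ‖z‖⁻¹ • z ∈ Metric.closedBall (0 : E) 1 := by
    rw [mem_closedBall_zero_iff, norm_smul, norm_inv, norm_norm]
    exact inv_mul_le_one
  rw [eq_norm_sq_mul_of_homogeneous hhom z, mul_comm]
  refine mul_le_mul_of_nonneg_right ?_ (sq_nonneg _)
  exact (le_abs_self _).trans ((hC _ hunit).trans (le_max_left _ _))

end HomogeneousBounds

section Norm2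

variable {I J : Type*} [Fintype I] [Fintype J]

theorem norm2_eq_norm_toLp (v : I → ℝ) : norm2 v = ‖(WithLp.toLp 2 v : EuclideanSpace ℝ I)‖ := by
  simp [norm2, EuclideanSpace.norm_eq]

theorem norm2_nonneg (v : I → ℝ) : 0 ≤ norm2 v := Real.sqrt_nonneg _

theorem norm2_sq (v : I → ℝ) : norm2 v ^ 2 = ∑ i, v i ^ 2 :=
  Real.sq_sqrt (Finset.sum_nonneg fun _ _ => sq_nonneg _)

theorem norm2_sumElim_sq (a : I → ℝ) (b : J → ℝ) :
    norm2 (Sum.elim a b) ^ 2 = norm2 a ^ 2 + norm2 b ^ 2 := by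
  simp only [norm2_sq, Fintype.sum_sum_type, Sum.elim_inl, Sum.elim_inr]

theorem norm2_le_norm2_sumElim_left (a : I → ℝ) (b : J → ℝ) : norm2 a ≤ norm2 (Sum.elim a b) :=
  (pow_le_pow_iff_left₀ (norm2_nonneg _) (norm2_nonneg _) two_ne_zero).1 <| by
    rw [norm2_sumElim_sq]; nlinarith [norm2_nonneg b]

theorem norm2_le_norm2_sumElim_right (a : I → ℝ) (b : J → ℝ) : norm2 b ≤ norm2 (Sum.elim a b) :=
  (pow_le_pow_iff_left₀ (norm2_nonneg _) (norm2_nonneg _) two_ne_zero).1 <| by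
    rw [norm2_sumElim_sq]; nlinarith [norm2_nonneg a]

theorem norm2_sumElim_le (a : I → ℝ) (b : J → ℝ) : norm2 (Sum.elim a b) ≤ norm2 a + norm2 b :=
  (pow_le_pow_iff_left₀ (norm2_nonneg _) (add_nonneg (norm2_nonneg _) (norm2_nonneg _))
    two_ne_zero).1 <| by
    rw [norm2_sumElim_sq]; nlinarith [norm2_nonneg a, norm2_nonneg b]

theorem norm2_sub_comm (v w : I → ℝ) : norm2 (v - w) = norm2 (w - v) := by
  simp only [norm2_eq_norm_toLp, WithLp.toLp_sub, norm_sub_rev]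

theorem norm2_sub_le (v w : I → ℝ) : norm2 (v - w) ≤ norm2 v + norm2 w := by
  simp only [norm2_eq_norm_toLp, WithLp.toLp_sub]
  exact norm_sub_le _ _

end Norm2

section QuadraticForm

variable {I : Type*} [Fintype I]

theorem smul_dotProduct_mulVec_smul (S : Matrix I I ℝ) (c : ℝ) (z : I → ℝ) :
    (c • z) ⬝ᵥ S *ᵥ (c • z) = c ^ 2 * (z ⬝ᵥ S *ᵥ z) := by
  rw [mulVec_smul, smul_dotProduct, dotProduct_smul, smul_eq_mul, smul_eq_mul]
  ring

theorem continuous_dotProduct_mulVec_ofLp (S : Matrix I I ℝ) :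
    Continuous fun z : EuclideanSpace ℝ I => z.ofLp ⬝ᵥ S *ᵥ z.ofLp := by
  have := PiLp.continuous_ofLp 2 (fun _ : I => ℝ)
  exact this.dotProduct (continuous_const.matrix_mulVec this)

theorem Matrix.exists_le_mul_norm2_sq (S : Matrix I I ℝ) :
    ∃ b > 0, ∀ z, z ⬝ᵥ S *ᵥ z ≤ b * norm2 z ^ 2 := by
  obtain ⟨b, hb, hS⟩ := exists_le_mul_norm_sq_of_homogeneous
    (continuous_dotProduct_mulVec_ofLp S) (fun c z => smul_dotProduct_mulVec_smul S c z.ofLp)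
  exact ⟨b, hb, fun z => by simpa [norm2_eq_norm_toLp] using hS (WithLp.toLp 2 z)⟩

theorem Matrix.exists_pos_mul_norm2_sq_le {S : Matrix I I ℝ} (hS : ∀ z ≠ 0, 0 < z ⬝ᵥ S *ᵥ z) :
    ∃ a > 0, ∀ z, a * norm2 z ^ 2 ≤ z ⬝ᵥ S *ᵥ z := by
  obtain ⟨a, ha, hS⟩ := exists_pos_mul_norm_sq_le_of_homogeneous
    (continuous_dotProduct_mulVec_ofLp S) (fun c z => smul_dotProduct_mulVec_smul S c z.ofLp)
    (fun z hz => hS z.ofLp (by simpa using hz))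
  exact ⟨a, ha, fun z => by simpa [norm2_eq_norm_toLp] using hS (WithLp.toLp 2 z)⟩

theorem Matrix.PosDef.exists_pos_mul_norm2_sq_le {S : Matrix I I ℝ} (hS : S.PosDef) :
    ∃ a > 0, ∀ z, a * norm2 z ^ 2 ≤ z ⬝ᵥ S *ᵥ z :=
  Matrix.exists_pos_mul_norm2_sq_le fun z hz => by
    simpa using hS.dotProduct_mulVec_pos hz

theorem Matrix.NegDef.exists_le_neg_mul_norm2_sq {S : Matrix I I ℝ} (hS : S.NegDef) :
    ∃ c > 0, ∀ z, z ⬝ᵥ S *ᵥ z ≤ -(c * norm2 z ^ 2) := by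
  obtain ⟨c, hc, h⟩ := Matrix.exists_pos_mul_norm2_sq_le (S := -S) fun z hz => by
    simpa [neg_mulVec] using hS z hz
  exact ⟨c, hc, fun z => le_neg_of_le_neg (by simpa [neg_mulVec] using h z)⟩

end QuadraticForm

section Lyapunov

variable {I : Type*} [Fintype I]

theorem HasDerivAt.dotProduct_mulVec (P : Matrix I I ℝ) {X : ℝ → I → ℝ} {D : I → ℝ} {t : ℝ}
    (hX : HasDerivAt X D t) :
    HasDerivAt (fun s => X s ⬝ᵥ P *ᵥ X s) (D ⬝ᵥ P *ᵥ X t + X t ⬝ᵥ P *ᵥ D) t := by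
  have hPX : HasDerivAt (fun s => P *ᵥ X s) (P *ᵥ D) t :=
    hasDerivAt_pi.2 fun i =>
      HasDerivAt.fun_sum fun j _ => (hasDerivAt_pi.1 hX j).const_mul (P i j)
  simpa only [dotProduct, Finset.sum_add_distrib] using
    HasDerivAt.fun_sum fun i _ => (hasDerivAt_pi.1 hX i).fun_mul (hasDerivAt_pi.1 hPX i)

theorem le_mul_exp_of_hasDerivAt_le_mul {V V' : ℝ → ℝ} {K : ℝ}
    (hV : ∀ t, 0 ≤ t → HasDerivAt V (V' t) t) (hle : ∀ t, 0 ≤ t → V' t ≤ K * V t)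
    {t : ℝ} (ht : 0 ≤ t) : V t ≤ V 0 * Real.exp (K * t) := by
  have hcont : ContinuousOn V (Set.Icc 0 t) := fun s hs =>
    (hV s hs.1).continuousAt.continuousWithinAt
  simpa [gronwallBound_ε0] using le_gronwallBound_of_liminf_deriv_right_le (K := K) (ε := 0) hcont
    (fun s hs _ hr => (hV s hs.1).hasDerivWithinAt.liminf_right_slope_le hr) le_rfl
    (fun s hs => by simpa using hle s hs.1) t ⟨ht, le_rfl⟩

theorem norm2_le_of_quadratic_lyapunov {P : Matrix I I ℝ} {a b c : ℝ} (ha : 0 < a) (hb : 0 < b)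
    (hc : 0 ≤ c) (hPlo : ∀ z, a * norm2 z ^ 2 ≤ z ⬝ᵥ P *ᵥ z)
    (hPhi : ∀ z, z ⬝ᵥ P *ᵥ z ≤ b * norm2 z ^ 2) {X D : ℝ → I → ℝ}
    (hX : ∀ t, 0 ≤ t → HasDerivAt X (D t) t)
    (hdec : ∀ t, 0 ≤ t → D t ⬝ᵥ P *ᵥ X t + X t ⬝ᵥ P *ᵥ D t ≤ -(c * norm2 (X t) ^ 2))
    {t : ℝ} (ht : 0 ≤ t) :
    norm2 (X t) ≤ √(b / a) * Real.exp (-(c / (2 * b)) * t) * norm2 (X 0) := by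
  have hV : X t ⬝ᵥ P *ᵥ X t ≤ X 0 ⬝ᵥ P *ᵥ X 0 * Real.exp (-(c / b) * t) := by
    refine le_mul_exp_of_hasDerivAt_le_mul (fun s hs => (hX s hs).dotProduct_mulVec P)
      (fun s hs => (hdec s hs).trans ?_) ht
    have hVb : c / b * (X s ⬝ᵥ P *ᵥ X s) ≤ c * norm2 (X s) ^ 2 :=
      calc _ ≤ c / b * (b * norm2 (X s) ^ 2) :=
            mul_le_mul_of_nonneg_left (hPhi _) (div_nonneg hc hb.le)
        _ = c * norm2 (X s) ^ 2 := by field_simp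
    linarith
  have hexp : Real.exp (-(c / b) * t) = Real.exp (-(c / (2 * b)) * t) ^ 2 := by
    rw [← Real.exp_nat_mul]; ring_nf
  have hsq : norm2 (X t) ^ 2 ≤ (√(b / a) * Real.exp (-(c / (2 * b)) * t) * norm2 (X 0)) ^ 2 := by
    rw [mul_pow, mul_pow, Real.sq_sqrt (div_nonneg hb.le ha.le), ← hexp, div_mul_eq_mul_div,
      div_mul_eq_mul_div, le_div_iff₀ ha]
    nlinarith [hPlo (X t), hPhi (X 0), Real.exp_pos (-(c / b) * t)]
  exact (pow_le_pow_iff_left₀ (norm2_nonneg _) (mul_nonneg (by positivity) (norm2_nonneg _))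
    two_ne_zero).1 hsq

end Lyapunov

namespace ResNet

variable {n₀ m : ℕ} (σ : ℝ → ℝ) (net : ResNet n₀ m)

def activations (y : Fin n₀ → ℝ) : net.NIdx → ℝ :=
  fun j => net.hfun σ (j.1 + 1) y (Fin.cast (by simp [dim]) j.2)

theorem sum_eq_sum_layer (f : net.NIdx → ℝ) (l : Fin (net.Lm + 1))
    (hf : ∀ j : net.NIdx, j.1 ≠ l → f j = 0) : ∑ j, f j = ∑ i, f ⟨l, i⟩ := by
  rw [Fintype.sum_sigma,
    Fintype.sum_eq_single l fun k hk => Finset.sum_eq_zero fun i _ => hf ⟨k, i⟩ hk]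

theorem apply_eq_Wskip_add_Npiw (y : Fin n₀ → ℝ) :
    net.apply σ y = net.Wskip *ᵥ y + net.Npiw *ᵥ net.activations σ y := by
  rw [apply, add_comm]
  congr 1
  funext i
  rw [mulVec, dotProduct, sum_eq_sum_layer net _ (Fin.last net.Lm) fun j hj => by
    simp [Npiw, show (j.1 : ℕ) ≠ net.Lm from fun h => hj (Fin.ext h)]]
  simp [Npiw, activations, mulVec, dotProduct]
  rfl

theorem activations_eq_comp {P : Type*} [Fintype P] (T : Matrix (Fin n₀) P ℝ) (z : P → ℝ) :
    net.activations σ (T *ᵥ z)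
      = σ ∘ (net.Nxix T *ᵥ z + net.Nxiw *ᵥ net.activations σ (T *ᵥ z)) := by
  funext ⟨⟨l, hl⟩, i⟩
  cases l with
  | zero =>
    have hNxiw : (net.Nxiw *ᵥ net.activations σ (T *ᵥ z)) ⟨⟨0, hl⟩, i⟩ = 0 :=
      Finset.sum_eq_zero fun j _ => by simp [Nxiw]
    have hNxix : (net.Nxix T *ᵥ z) ⟨⟨0, hl⟩, i⟩ = (net.W 0 *ᵥ (T *ᵥ z)) i := by
      simp [Nxix, W1, mulVec_mulVec]
      rfl
    rw [Function.comp_apply, Pi.add_apply, hNxiw, add_zero, hNxix]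
    rfl
  | succ k =>
    have hNxix : (net.Nxix T *ᵥ z) ⟨⟨k + 1, hl⟩, i⟩ = 0 :=
      Finset.sum_eq_zero fun j _ => by simp [Nxix]
    have hNxiw : (net.Nxiw *ᵥ net.activations σ (T *ᵥ z)) ⟨⟨k + 1, hl⟩, i⟩
        = ∑ i' : Fin (net.hw k), net.W (k + 1) i (Fin.cast (by simp) i')
            * net.activations σ (T *ᵥ z) ⟨⟨k, by omega⟩, i'⟩ := by
      rw [mulVec, dotProduct, sum_eq_sum_layer net _ ⟨k, by omega⟩ fun j hj => by
        simp [Nxiw, show (j.1 : ℕ) ≠ k from fun h => hj (Fin.ext h)]]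
      simp [Nxiw]
    rw [Function.comp_apply, Pi.add_apply, hNxix, zero_add, hNxiw]
    rfl

end ResNet

section Stacked

variable {P : Type*} [Fintype P] {n₁ m₁ n₂ m₂ o₁ o₂ : ℕ} (σ : ℝ → ℝ)
  (net1 : ResNet n₁ m₁) (net2 : ResNet n₂ m₂) (T11 : Matrix (Fin n₁) P ℝ)
  (T21 : Matrix (Fin n₂) P ℝ) (T12 : Matrix (Fin o₁) (Fin m₁) ℝ) (T22 : Matrix (Fin o₂) (Fin m₂) ℝ)

def stackedActivations (p : P → ℝ) : net1.NIdx ⊕ net2.NIdx → ℝ :=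
  Sum.elim (net1.activations σ (T11 *ᵥ p)) (net2.activations σ (T21 *ᵥ p))

def stackedApply (p : P → ℝ) : Fin o₁ ⊕ Fin o₂ → ℝ :=
  Sum.elim (T12 *ᵥ net1.apply σ (T11 *ᵥ p)) (T22 *ᵥ net2.apply σ (T21 *ᵥ p))

theorem Rpi2_mulVec_stackedActivations [DecidableEq P] (p : P → ℝ) :
    Rpi2 net1 net2 T11 T21 T12 T22 *ᵥ Sum.elim p (stackedActivations σ net1 net2 T11 T21 p)
      = Sum.elim p (stackedApply σ net1 net2 T11 T21 T12 T22 p) := by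
  simp [Rpi2, Npix2, Npiw2, stackedActivations, stackedApply, fromBlocks_mulVec, fromRows_mulVec,
    ResNet.apply_eq_Wskip_add_Npiw, mulVec_add, ← mulVec_mulVec, Sum.elim_add_add]

theorem Rxi2_mulVec (p : P → ℝ) (w : net1.NIdx ⊕ net2.NIdx → ℝ) :
    Rxi2 net1 net2 T11 T21 *ᵥ Sum.elim p w
      = Sum.elim (Nxix2 net1 net2 T11 T21 *ᵥ p + Nxiw2 net1 net2 *ᵥ w) w := by
  simp [Rxi2, fromBlocks_mulVec]

theorem stackedActivations_eq_comp (p : P → ℝ) :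
    stackedActivations σ net1 net2 T11 T21 p
      = σ ∘ (Nxix2 net1 net2 T11 T21 *ᵥ p
          + Nxiw2 net1 net2 *ᵥ stackedActivations σ net1 net2 T11 T21 p) := by
  funext i
  rcases i with j | j
  · simpa [stackedActivations, Nxix2, Nxiw2, fromRows_mulVec, fromBlocks_mulVec]
      using congrFun (net1.activations_eq_comp σ T11 p) j
  · simpa [stackedActivations, Nxix2, Nxiw2, fromRows_mulVec, fromBlocks_mulVec]
      using congrFun (net2.activations_eq_comp σ T21 p) j

end Stacked

theorem dotProduct_mulVec_transpose_mul_mul {I J : Type*} [Fintype I] [Fintype J]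
    (R : Matrix I J ℝ) (Q : Matrix I I ℝ) (v : J → ℝ) :
    v ⬝ᵥ (Rᵀ * Q * R) *ᵥ v = R *ᵥ v ⬝ᵥ Q *ᵥ (R *ᵥ v) := by
  rw [← mulVec_mulVec, ← mulVec_mulVec, dotProduct_mulVec, vecMul_transpose]

theorem sector_dotProduct_mulVec_nonneg {I : Type*} [Fintype I] [DecidableEq I] {σ : ℝ → ℝ}
    {α β lam : I → ℝ} (hlam : ∀ i, 0 ≤ lam i) (hsec : ∀ i, SectorBounded σ (α i) (β i))
    (ξ : I → ℝ) :
    0 ≤ Sum.elim ξ (σ ∘ ξ) ⬝ᵥ ((Psi α β)ᵀ * Mmat lam * Psi α β) *ᵥ Sum.elim ξ (σ ∘ ξ) := by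
  have hPsi : Psi α β *ᵥ Sum.elim ξ (σ ∘ ξ)
      = Sum.elim (fun i => β i * ξ i - σ (ξ i)) (fun i => σ (ξ i) - α i * ξ i) := by
    funext i
    rcases i with i | i <;> simp [Psi, fromBlocks_mulVec, mulVec_diagonal, neg_mulVec] <;> ring
  rw [dotProduct_mulVec_transpose_mul_mul, hPsi]
  simp only [Mmat, fromBlocks_mulVec, zero_mulVec, mulVec_diagonal, zero_add, add_zero,
    Sum.elim_comp_inl, Sum.elim_comp_inr, dotProduct, Fintype.sum_sum_type, Sum.elim_inl,
    Sum.elim_inr]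
  refine add_nonneg (Finset.sum_nonneg fun i _ => ?_) (Finset.sum_nonneg fun i _ => ?_) <;>
    nlinarith [mul_nonneg (hlam i) (hsec i (ξ i))]

theorem lyapunov_derivative_le_lmi {n₁ m₁ n₂ m₂ o₁ o₂ : ℕ} {σ : ℝ → ℝ}
    (net1 : ResNet n₁ m₁) (net2 : ResNet n₂ m₂) (T11 : Matrix (Fin n₁) (Fin o₁ ⊕ Fin o₂) ℝ)
    (T21 : Matrix (Fin n₂) (Fin o₁ ⊕ Fin o₂) ℝ) (T12 : Matrix (Fin o₁) (Fin m₁) ℝ)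
    (T22 : Matrix (Fin o₂) (Fin m₂) ℝ) (Ahat Phat : Matrix (Fin o₁ ⊕ Fin o₂) (Fin o₁ ⊕ Fin o₂) ℝ)
    {α β lam : net1.NIdx ⊕ net2.NIdx → ℝ} (hlam : ∀ i, 0 ≤ lam i)
    (hsec : ∀ i, SectorBounded σ (α i) (β i)) (X : Fin o₁ ⊕ Fin o₂ → ℝ) :
    (Ahat *ᵥ X + stackedApply σ net1 net2 T11 T21 T12 T22 X) ⬝ᵥ Phat *ᵥ X
        + X ⬝ᵥ Phat *ᵥ (Ahat *ᵥ X + stackedApply σ net1 net2 T11 T21 T12 T22 X)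
      ≤ Sum.elim X (stackedActivations σ net1 net2 T11 T21 X) ⬝ᵥ
          ((Rpi2 net1 net2 T11 T21 T12 T22)ᵀ * fromBlocks (Ahatᵀ * Phat + Phat * Ahat) Phat Phat 0
              * Rpi2 net1 net2 T11 T21 T12 T22
            + (Rxi2 net1 net2 T11 T21)ᵀ * (Psi α β)ᵀ * Mmat lam * Psi α β * Rxi2 net1 net2 T11 T21)
          *ᵥ Sum.elim X (stackedActivations σ net1 net2 T11 T21 X) := by
  set u := stackedApply σ net1 net2 T11 T21 T12 T22 X
  set w := stackedActivations σ net1 net2 T11 T21 X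
  have hsector := sector_dotProduct_mulVec_nonneg hlam hsec
    (Nxix2 net1 net2 T11 T21 *ᵥ X + Nxiw2 net1 net2 *ᵥ w)
  rw [← stackedActivations_eq_comp, ← Rxi2_mulVec, ← dotProduct_mulVec_transpose_mul_mul]
    at hsector
  have hsupply : Sum.elim X w ⬝ᵥ ((Rpi2 net1 net2 T11 T21 T12 T22)ᵀ
        * fromBlocks (Ahatᵀ * Phat + Phat * Ahat) Phat Phat 0 * Rpi2 net1 net2 T11 T21 T12 T22)
        *ᵥ Sum.elim X w
      = (Ahat *ᵥ X + u) ⬝ᵥ Phat *ᵥ X + X ⬝ᵥ Phat *ᵥ (Ahat *ᵥ X + u) := by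
    rw [dotProduct_mulVec_transpose_mul_mul, Rpi2_mulVec_stackedActivations, fromBlocks_mulVec]
    simp only [Sum.elim_comp_inl, Sum.elim_comp_inr, zero_mulVec, add_zero,
      sumElim_dotProduct_sumElim, add_mulVec, mulVec_add, dotProduct_add, add_dotProduct,
      ← mulVec_mulVec]
    rw [dotProduct_mulVec X Ahatᵀ, vecMul_transpose]
    ring
  simp only [Matrix.mul_assoc] at hsector hsupply ⊢
  rw [add_mulVec, dotProduct_add, hsupply]
  linarith

theorem hasDerivAt_state_error {ns nu no : ℕ} (A : Matrix (Fin ns) (Fin ns) ℝ)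
    (B : Matrix (Fin ns) (Fin nu) ℝ) (C : Matrix (Fin no) (Fin ns) ℝ) (σ : ℝ → ℝ)
    (net1 : ResNet ns nu) (net2 : ResNet no ns) {x xh : ℝ → Fin ns → ℝ} {t : ℝ}
    (hx : HasDerivAt x (A *ᵥ x t + B *ᵥ net1.apply σ (xh t)) t)
    (hxh : HasDerivAt xh
      (A *ᵥ xh t + B *ᵥ net1.apply σ (xh t) + net2.apply σ (C *ᵥ (xh t - x t))) t) :
    HasDerivAt (fun s => Sum.elim (x s) (xh s - x s))
      (fromBlocks A 0 0 A *ᵥ Sum.elim (x t) (xh t - x t)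
        + stackedApply σ net1 net2 (fromCols 1 1) (fromCols 0 C) B 1
            (Sum.elim (x t) (xh t - x t))) t := by
  refine hasDerivAt_pi.2 ?_
  rintro (i | i)
  · simpa [stackedApply, fromBlocks_mulVec, fromCols_mulVec_sumElim]
      using hasDerivAt_pi.1 hx i
  · refine ((hasDerivAt_pi.1 hxh i).fun_sub (hasDerivAt_pi.1 hx i)).congr_deriv ?_
    simp [stackedApply, fromBlocks_mulVec, mulVec_sub]
    ring

theorem neural_observer_controller_LTI_general
    {ns nu no : ℕ} (A : Matrix (Fin ns) (Fin ns) ℝ) (B : Matrix (Fin ns) (Fin nu) ℝ)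
    (C : Matrix (Fin no) (Fin ns) ℝ)
    {σ : ℝ → ℝ}
    (net1 : ResNet ns nu) (net2 : ResNet no ns)
    (α β : (net1.NIdx ⊕ net2.NIdx) → ℝ)
    (hsec : ∀ i, SectorBounded σ (α i) (β i))
    (lam : (net1.NIdx ⊕ net2.NIdx) → ℝ) (hlam : ∀ i, 0 ≤ lam i)
    (Phat : Matrix (Fin ns ⊕ Fin ns) (Fin ns ⊕ Fin ns) ℝ) (hP : Phat.PosDef)
    (hLMI : Matrix.NegDef
      ((Rpi2 net1 net2 (Matrix.fromCols (1 : Matrix (Fin ns) (Fin ns) ℝ) 1) (Matrix.fromCols 0 C) B (1 : Matrix (Fin ns) (Fin ns) ℝ))ᵀ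
          * Matrix.fromBlocks
              ((Matrix.fromBlocks A 0 0 A)ᵀ * Phat + Phat * Matrix.fromBlocks A 0 0 A)
              Phat Phat 0
          * Rpi2 net1 net2 (Matrix.fromCols (1 : Matrix (Fin ns) (Fin ns) ℝ) 1) (Matrix.fromCols 0 C) B (1 : Matrix (Fin ns) (Fin ns) ℝ)
        + (Rxi2 net1 net2 (Matrix.fromCols (1 : Matrix (Fin ns) (Fin ns) ℝ) 1) (Matrix.fromCols 0 C))ᵀ
          * (Psi α β)ᵀ * Mmat lam * Psi α β
          * Rxi2 net1 net2 (Matrix.fromCols (1 : Matrix (Fin ns) (Fin ns) ℝ) 1) (Matrix.fromCols 0 C))) :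
    ∃ M : ℝ, 0 < M ∧ ∃ κ : ℝ, 0 < κ ∧
      ∀ x xh : ℝ → Fin ns → ℝ,
        (∀ t : ℝ, 0 ≤ t →
          HasDerivAt x (A.mulVec (x t) + B.mulVec (net1.apply σ (xh t))) t) →
        (∀ t : ℝ, 0 ≤ t →
          HasDerivAt xh (A.mulVec (xh t) + B.mulVec (net1.apply σ (xh t))
            + net2.apply σ (C.mulVec (xh t - x t))) t) →
        ∀ t : ℝ, 0 ≤ t →
          norm2 (x t) + norm2 (x t - xh t)
            ≤ M * Real.exp (-κ * t) * (norm2 (x 0) + norm2 (xh 0)) := by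
  obtain ⟨c, hc, hLMIc⟩ := hLMI.exists_le_neg_mul_norm2_sq
  obtain ⟨a, ha, hPlo⟩ := hP.exists_pos_mul_norm2_sq_le
  obtain ⟨b, hb, hPhi⟩ := Phat.exists_le_mul_norm2_sq
  refine ⟨4 * √(b / a), by positivity, c / (2 * b), by positivity, fun x xh hx hxh t ht => ?_⟩
  have hdecay := norm2_le_of_quadratic_lyapunov ha hb hc.le hPlo hPhi
    (X := fun s => Sum.elim (x s) (xh s - x s))
    (fun s hs => hasDerivAt_state_error A B C σ net1 net2 (hx s hs) (hxh s hs))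
    (fun s _ => (lyapunov_derivative_le_lmi net1 net2 _ _ B 1 (fromBlocks A 0 0 A) Phat hlam hsec
      _).trans <| (hLMIc _).trans <| neg_le_neg <| mul_le_mul_of_nonneg_left
        (pow_le_pow_left₀ (norm2_nonneg _) (norm2_le_norm2_sumElim_left _ _) 2) hc.le) ht
  have hX0 : norm2 (Sum.elim (x 0) (xh 0 - x 0)) ≤ 2 * (norm2 (x 0) + norm2 (xh 0)) := by
    linarith [norm2_sumElim_le (x 0) (xh 0 - x 0), norm2_sub_le (xh 0) (x 0), norm2_nonneg (xh 0)]
  calc norm2 (x t) + norm2 (x t - xh t) ≤ 2 * norm2 (Sum.elim (x t) (xh t - x t)) := by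
        rw [norm2_sub_comm]
        linarith [norm2_le_norm2_sumElim_left (x t) (xh t - x t),
          norm2_le_norm2_sumElim_right (x t) (xh t - x t)]
    _ ≤ 2 * (√(b / a) * Real.exp (-(c / (2 * b)) * t) * (2 * (norm2 (x 0) + norm2 (xh 0)))) := by
        gcongr
        exact hdecay.trans (by gcongr)
    _ = 4 * √(b / a) * Real.exp (-(c / (2 * b)) * t) * (norm2 (x 0) + norm2 (xh 0)) := by ring

/-- Theorem 2: observer-based NN control of an LTI system.  With `K = 2` stacked networks
(`π₁` the controller acting on `x̂`, `π₂` the observer correction acting on `C(x̂ - x)`),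
`T₁¹ = [I, I]`, `T₁² = B`, `T₂¹ = [0, C]`, `T₂² = I` and `Â = diag(A, A)`, if the LMI has a
symmetric positive definite solution `P̂`, then the closed loop is neurally exponentially
observable and globally exponentially stable. -/
theorem neural_observer_controller_LTI
    {ns nu no : ℕ} (A : Matrix (Fin ns) (Fin ns) ℝ) (B : Matrix (Fin ns) (Fin nu) ℝ)
    (C : Matrix (Fin no) (Fin ns) ℝ)
    {σ : ℝ → ℝ} (hσ0 : σ 0 = 0)
    (net1 : ResNet ns nu) (net2 : ResNet no ns)
    (α β : (net1.NIdx ⊕ net2.NIdx) → ℝ) (hαβ : ∀ i, α i ≤ β i)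
    (hsec : ∀ i, SectorBounded σ (α i) (β i))
    (lam : (net1.NIdx ⊕ net2.NIdx) → ℝ) (hlam : ∀ i, 0 ≤ lam i)
    (Phat : Matrix (Fin ns ⊕ Fin ns) (Fin ns ⊕ Fin ns) ℝ) (hP : Phat.PosDef)
    (hLMI : Matrix.NegDef
      ((Rpi2 net1 net2 (Matrix.fromCols (1 : Matrix (Fin ns) (Fin ns) ℝ) 1) (Matrix.fromCols 0 C) B (1 : Matrix (Fin ns) (Fin ns) ℝ))ᵀ
          * Matrix.fromBlocks
              ((Matrix.fromBlocks A 0 0 A)ᵀ * Phat + Phat * Matrix.fromBlocks A 0 0 A)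
              Phat Phat 0
          * Rpi2 net1 net2 (Matrix.fromCols (1 : Matrix (Fin ns) (Fin ns) ℝ) 1) (Matrix.fromCols 0 C) B (1 : Matrix (Fin ns) (Fin ns) ℝ)
        + (Rxi2 net1 net2 (Matrix.fromCols (1 : Matrix (Fin ns) (Fin ns) ℝ) 1) (Matrix.fromCols 0 C))ᵀ
          * (Psi α β)ᵀ * Mmat lam * Psi α β
          * Rxi2 net1 net2 (Matrix.fromCols (1 : Matrix (Fin ns) (Fin ns) ℝ) 1) (Matrix.fromCols 0 C))) :
    ∃ M : ℝ, 0 < M ∧ ∃ κ : ℝ, 0 < κ ∧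
      ∀ x xh : ℝ → Fin ns → ℝ,
        (∀ t : ℝ, 0 ≤ t →
          HasDerivAt x (A.mulVec (x t) + B.mulVec (net1.apply σ (xh t))) t) →
        (∀ t : ℝ, 0 ≤ t →
          HasDerivAt xh (A.mulVec (xh t) + B.mulVec (net1.apply σ (xh t))
            + net2.apply σ (C.mulVec (xh t - x t))) t) →
        ∀ t : ℝ, 0 ≤ t →
          norm2 (x t) + norm2 (x t - xh t)
            ≤ M * Real.exp (-κ * t) * (norm2 (x 0) + norm2 (xh 0)) :=
  neural_observer_controller_LTI_general A B C net1 net2 α β hsec lam hlam Phat hP hLMI
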